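/- arXiv:2306.17144 — 4 statements merged into one kernel-verified Lean document; each statement's English description precedes it below -/
import Mathlib

section
/- Let f : ℝⁿ → ℝ and g : ℝⁿ → ℝ ∪ {+∞} be arbitrary functions, and for i = 1,…,p let h_i : ℝ^{m_i} → ℝ be convex and Ψ_i : ℝⁿ → ℝ^{m_i} be arbitrary maps. If x̄ ∈ ℝⁿ is a global minimizer of φ with φ(x̄) < +∞ (equivalently, g(x̄) < +∞), then there exists ȳ = (ȳ_1,…,ȳ_p) ∈ ℝ^{m_1} × ⋯ × ℝ^{m_p} such that (x̄,ȳ) is a global minimizer of Φ, i.e., Φ(x̄,ȳ) ≤ Φ(x,y) for all (x,y). -/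
open scoped BigOperators RealInnerProductSpace

/-- Fenchel conjugate of a real-valued function, valued in `ℝ ∪ {+∞}` (encoded in `EReal`). -/
noncomputable def fenchelConj {m : ℕ} (h : EuclideanSpace ℝ (Fin m) → ℝ)
    (y : EuclideanSpace ℝ (Fin m)) : EReal :=
  ⨆ u : EuclideanSpace ℝ (Fin m), ((⟪u, y⟫ - h u : ℝ) : EReal)

/-!
At a minimizer `x̄` of `φ`, choose `ȳᵢ` a subgradient of `hᵢ` at `Ψᵢ(x̄)`. Then Fenchel–Young
holds with equality, `hᵢ*(ȳᵢ) - ⟪Ψᵢ x̄, ȳᵢ⟫ = -hᵢ(Ψᵢ x̄)`, so `Φ(x̄, ȳ) = φ(x̄)`; while for any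
`(x, y)` the Fenchel–Young inequality gives `Φ(x, y) ≥ φ(x) ≥ φ(x̄)`.
-/

open Set

theorem EReal.coe_finset_sum {ι : Type*} (s : Finset ι) (f : ι → ℝ) :
    ((∑ i ∈ s, f i : ℝ) : EReal) = ∑ i ∈ s, (f i : EReal) :=
  map_sum (⟨⟨Real.toEReal, EReal.coe_zero⟩, EReal.coe_add⟩ : ℝ →+ EReal) f s

theorem EReal.add_coe_sub_sum {ι : Type*} (s : Finset ι) (e : EReal) (a : ℝ) (b : ι → ℝ) :
    e + ((a - ∑ i ∈ s, b i : ℝ) : EReal) = e + a + ∑ i ∈ s, ((-b i : ℝ) : EReal) := by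
  rw [← EReal.coe_finset_sum, add_assoc, ← EReal.coe_add, Finset.sum_neg_distrib, sub_eq_add_neg]

/-- A functional `L` separating `(v, f v)` from the open convex strict epigraph of `f` is not
vertical (`L (0, 1) < 0`); rescaled, its horizontal part is the subgradient. -/
theorem ConvexOn.exists_strongDual_subgradient {E : Type*} [NormedAddCommGroup E]
    [NormedSpace ℝ E] {f : E → ℝ} (hf : ConvexOn ℝ univ f) (hcont : Continuous f) (v : E) :
    ∃ ℓ : StrongDual ℝ E, ∀ u, f v + ℓ (u - v) ≤ f u := by
  obtain ⟨L, hL⟩ := geometric_hahn_banach_open_point hf.convex_strict_epigraph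
    (by simpa using isOpen_lt (hcont.comp continuous_fst) continuous_snd)
    (by simp : (v, f v) ∉ {p : E × ℝ | p.1 ∈ univ ∧ f p.1 < p.2})
  set c := L (0, 1)
  have hL_apply : ∀ u t, L (u, t) = L (u, 0) + t * c := fun u t => by
    rw [show (u, t) = (u, 0) + t • (0, 1) by simp, map_add, map_smul, smul_eq_mul]
  have hc : 0 < -c := by
    have := hL (v, f v + 1) (by simp)
    rw [hL_apply, hL_apply v (f v)] at this
    linarith
  refine ⟨(-c)⁻¹ • L.comp (ContinuousLinearMap.inl ℝ E ℝ), fun u => ?_⟩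
  refine le_of_forall_pos_lt_add fun ε hε => ?_
  have hu := hL (u, f u + ε) (by simp [hε])
  rw [hL_apply, hL_apply v (f v)] at hu
  have hslope : (-c)⁻¹ * (L (u, 0) - L (v, 0)) < f u + ε - f v := by
    rw [inv_mul_lt_iff₀ hc]
    linarith
  rw [smul_apply, ContinuousLinearMap.comp_apply,
    ContinuousLinearMap.inl_apply, smul_eq_mul, ← sub_zero (0 : ℝ), ← Prod.mk_sub_mk, map_sub]
  linarith

theorem ConvexOn.exists_subgradient {E : Type*} [NormedAddCommGroup E] [InnerProductSpace ℝ E]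
    [FiniteDimensional ℝ E] {f : E → ℝ} (hf : ConvexOn ℝ univ f) (v : E) :
    ∃ y : E, ∀ u, f v + ⟪u - v, y⟫ ≤ f u := by
  obtain ⟨ℓ, hℓ⟩ := hf.exists_strongDual_subgradient hf.locallyLipschitz.continuous v
  refine ⟨(InnerProductSpace.toDual ℝ E).symm ℓ, fun u => ?_⟩
  rw [real_inner_comm, InnerProductSpace.toDual_symm_apply]
  exact hℓ u

section FenchelConj

variable {m : ℕ} (h : EuclideanSpace ℝ (Fin m) → ℝ)

theorem neg_le_fenchelConj_sub_inner (u y : EuclideanSpace ℝ (Fin m)) :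
    ((-h u : ℝ) : EReal) ≤ fenchelConj h y - ((⟪u, y⟫ : ℝ) : EReal) := by
  rw [EReal.le_sub_iff_add_le (.inl (EReal.coe_ne_bot _)) (.inl (EReal.coe_ne_top _)),
    ← EReal.coe_add, neg_add_eq_sub]
  exact le_iSup (fun u => ((⟪u, y⟫ - h u : ℝ) : EReal)) u

variable {h}

theorem fenchelConj_eq_of_subgradient {v y : EuclideanSpace ℝ (Fin m)}
    (hy : ∀ u, h v + ⟪u - v, y⟫ ≤ h u) : fenchelConj h y = ((⟪v, y⟫ - h v : ℝ) : EReal) := by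
  refine le_antisymm (iSup_le fun u => EReal.coe_le_coe_iff.mpr ?_)
    (le_iSup (fun u => ((⟪u, y⟫ - h u : ℝ) : EReal)) v)
  have := hy u
  rw [inner_sub_left] at this
  linarith

theorem fenchelConj_sub_inner_eq_neg_of_subgradient {v y : EuclideanSpace ℝ (Fin m)}
    (hy : ∀ u, h v + ⟪u - v, y⟫ ≤ h u) :
    fenchelConj h y - ((⟪v, y⟫ : ℝ) : EReal) = ((-h v : ℝ) : EReal) := by
  rw [fenchelConj_eq_of_subgradient hy, ← EReal.coe_sub, sub_sub_cancel_left]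

end FenchelConj

theorem min_phi_implies_min_Phi_general {n p : ℕ} {m : Fin p → ℕ}
    (f : EuclideanSpace ℝ (Fin n) → ℝ)
    (g : EuclideanSpace ℝ (Fin n) → EReal)
    (h : ∀ i, EuclideanSpace ℝ (Fin (m i)) → ℝ)
    (hconv : ∀ i, ConvexOn ℝ Set.univ (h i))
    (Ψ : ∀ i, EuclideanSpace ℝ (Fin n) → EuclideanSpace ℝ (Fin (m i)))
    (xbar : EuclideanSpace ℝ (Fin n))
    (hmin : ∀ x : EuclideanSpace ℝ (Fin n),
      g xbar + ((f xbar - ∑ i, h i (Ψ i xbar) : ℝ) : EReal)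
        ≤ g x + ((f x - ∑ i, h i (Ψ i x) : ℝ) : EReal)) :
    ∃ ybar : ∀ i, EuclideanSpace ℝ (Fin (m i)),
      ∀ (x : EuclideanSpace ℝ (Fin n)) (y : ∀ i, EuclideanSpace ℝ (Fin (m i))),
        g xbar + ((f xbar : ℝ) : EReal)
            + ∑ i, (fenchelConj (h i) (ybar i) - ((⟪Ψ i xbar, ybar i⟫ : ℝ) : EReal))
          ≤ g x + ((f x : ℝ) : EReal)
            + ∑ i, (fenchelConj (h i) (y i) - ((⟪Ψ i x, y i⟫ : ℝ) : EReal)) := by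
  choose ybar hybar using fun i => (hconv i).exists_subgradient (Ψ i xbar)
  refine ⟨ybar, fun x y => ?_⟩
  calc g xbar + ((f xbar : ℝ) : EReal)
          + ∑ i, (fenchelConj (h i) (ybar i) - ((⟪Ψ i xbar, ybar i⟫ : ℝ) : EReal))
      _ = g xbar + ((f xbar - ∑ i, h i (Ψ i xbar) : ℝ) : EReal) := by
        simp only [fenchelConj_sub_inner_eq_neg_of_subgradient (hybar _), EReal.add_coe_sub_sum]
      _ ≤ g x + ((f x - ∑ i, h i (Ψ i x) : ℝ) : EReal) := hmin x
      _ = g x + ((f x : ℝ) : EReal) + ∑ i, ((-h i (Ψ i x) : ℝ) : EReal) :=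
        EReal.add_coe_sub_sum _ _ _ _
      _ ≤ g x + ((f x : ℝ) : EReal)
          + ∑ i, (fenchelConj (h i) (y i) - ((⟪Ψ i x, y i⟫ : ℝ) : EReal)) := by
        gcongr with i
        exact neg_le_fenchelConj_sub_inner (h i) (Ψ i x) (y i)

/-- If `xbar` is a global minimizer of the primal objective `φ` with `φ(xbar) < +∞`,
then there exists `ybar` such that `(xbar, ybar)` is a global minimizer of the
primal-dual objective `Φ`. -/
theorem min_phi_implies_min_Phi {n p : ℕ} {m : Fin p → ℕ}
    (f : EuclideanSpace ℝ (Fin n) → ℝ)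
    (g : EuclideanSpace ℝ (Fin n) → EReal) (hg : ∀ x, g x ≠ ⊥)
    (h : ∀ i, EuclideanSpace ℝ (Fin (m i)) → ℝ)
    (hconv : ∀ i, ConvexOn ℝ Set.univ (h i))
    (Ψ : ∀ i, EuclideanSpace ℝ (Fin n) → EuclideanSpace ℝ (Fin (m i)))
    (xbar : EuclideanSpace ℝ (Fin n))
    (hmin : ∀ x : EuclideanSpace ℝ (Fin n),
      g xbar + ((f xbar - ∑ i, h i (Ψ i xbar) : ℝ) : EReal)
        ≤ g x + ((f x - ∑ i, h i (Ψ i x) : ℝ) : EReal))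
    (hfin : g xbar + ((f xbar - ∑ i, h i (Ψ i xbar) : ℝ) : EReal) < ⊤) :
    ∃ ybar : ∀ i, EuclideanSpace ℝ (Fin (m i)),
      ∀ (x : EuclideanSpace ℝ (Fin n)) (y : ∀ i, EuclideanSpace ℝ (Fin (m i))),
        g xbar + ((f xbar : ℝ) : EReal)
            + ∑ i, (fenchelConj (h i) (ybar i) - ((⟪Ψ i xbar, ybar i⟫ : ℝ) : EReal))
          ≤ g x + ((f x : ℝ) : EReal)
            + ∑ i, (fenchelConj (h i) (y i) - ((⟪Ψ i x, y i⟫ : ℝ) : EReal)) :=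
  min_phi_implies_min_Phi_general f g h hconv Ψ xbar hmin
end

section
/- Let f : ℝⁿ → ℝ, g : ℝⁿ → ℝ, κ ≥ 0, and for i = 1,…,p let Ψ_i : ℝⁿ → ℝ^{m_i} be differentiable with derivative x ↦ DΨ_i(x) that is L_i-Lipschitz continuous (in operator norm), and let c_i : ℝ^{m_i} → ℝ be convex. Fix x ∈ ℝⁿ, y_i ∈ ℝ^{m_i}, γ > 0 and μ_i > 0, and let v ∈ ℝⁿ satisfy the κ-descent inequality for f at x. Suppose: (a) x̂ ∈ ℝⁿ minimizes u ↦ g(u) + (1/(2γ))‖u − (x + γ Σ_{i=1}^p DΨ_i(x)* y_i − γ v)‖² over ℝⁿ and g is differentiable at x̂; (b) for each i, ŷ_i minimizes u ↦ c_i(u) + (1/(2μ_i))‖u − (y_i + μ_i Ψ_i(x̂))‖² over ℝ^{m_i} and c_i is differentiable at ŷ_i; (c) there exists v̂ ∈ ℝⁿ satisfying the κ-descent inequality for f at x̂. Define Φ(x,y) := f(x) + g(x) + Σ_{i=1}^p (c_i(y_i) − ⟨Ψ_i(x), y_i⟩), d := x̂ − x and e_i := ŷ_i − y_i. Then the Dini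 upper directional derivative of Φ at (x̂, ŷ) in the direction (d, e) satisfies d⁺Φ((x̂,ŷ); (d,e)) ≤ (2κ + p/2 + Σ_{i=1}^p L_i‖y_i‖ − 1/γ)‖d‖² + Σ_{i=1}^p ( (1/2)‖DΨ_i(x̂)‖² − 1/μ_i )‖e_i‖², where ‖DΨ_i(x̂)‖ is the operator norm. -/
/-!
Along the segment `t ↦ (x̂ + t d, ŷ + t e)` the objective splits into `f`, whose slope is at most
`⟪v̂, d⟫ + O(t)` by the descent inequality at `x̂`, and a part that is differentiable at `t = 0`.
The first-order optimality conditions of the two proximal steps identify `Dg(x̂) d` and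
`Dcᵢ(ŷᵢ) eᵢ`; what remains is `⟪v̂ - v, d⟫ ≤ 2κ‖d‖²` (add the descent inequalities at `x` and at
`x̂`), the Lipschitz bound on `DΨᵢ(x) - DΨᵢ(x̂)`, and Young's inequality for `⟪DΨᵢ(x̂) d, eᵢ⟫`.
-/

open scoped BigOperators RealInnerProductSpace Topology

/-- The Dini upper directional derivative (valued in `EReal`) of a real-valued function `F`
of two (blocks of) variables at `(z, w)` in the direction `(d, e)`:
`limsup_{t ↓ 0} (F(z + t d, w + t e) − F(z, w))/t`. -/
noncomputable def diniUpper2 {n p : ℕ} {m : Fin p → ℕ}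
    (F : EuclideanSpace ℝ (Fin n) → (∀ i, EuclideanSpace ℝ (Fin (m i))) → ℝ)
    (z : EuclideanSpace ℝ (Fin n)) (w : ∀ i, EuclideanSpace ℝ (Fin (m i)))
    (d : EuclideanSpace ℝ (Fin n)) (e : ∀ i, EuclideanSpace ℝ (Fin (m i))) : EReal :=
  Filter.limsup
    (fun t : ℝ => (((F (z + t • d) (fun i => w i + t • e i) - F z w) / t : ℝ) : EReal))
    (𝓝[>] (0 : ℝ))

open Filter

section

variable {E : Type*} [NormedAddCommGroup E] [InnerProductSpace ℝ E]
  {F : Type*} [NormedAddCommGroup F] [InnerProductSpace ℝ F]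

def IsUpperSubgradient (f : E → ℝ) (κ : ℝ) (x v : E) : Prop :=
  ∀ z, f z ≤ f x + ⟪v, z - x⟫ + κ * ‖z - x‖ ^ 2

namespace IsUpperSubgradient

variable {f : E → ℝ} {κ : ℝ} {x v : E}

theorem sub_le (h : IsUpperSubgradient f κ x v) (d : E) (t : ℝ) :
    f (x + t • d) - f x ≤ ⟪v, d⟫ * t + κ * ‖d‖ ^ 2 * t ^ 2 := by
  have := h (x + t • d)
  rw [add_sub_cancel_left, real_inner_smul_right, norm_smul, Real.norm_eq_abs, mul_pow,
    sq_abs] at this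
  linarith

theorem inner_sub_le {x' v' : E} (h : IsUpperSubgradient f κ x v)
    (h' : IsUpperSubgradient f κ x' v') : ⟪v' - v, x' - x⟫ ≤ 2 * κ * ‖x' - x‖ ^ 2 := by
  have h₁ := h x'
  have h₂ := h' x
  rw [← neg_sub x' x, inner_neg_right, norm_neg] at h₂
  rw [inner_sub_left]
  linarith

end IsUpperSubgradient

theorem fderiv_apply_eq_of_isMinimizer_prox {g : E → ℝ} {ρ : ℝ} (hρ : 0 < ρ) {a s z : E}
    (hmin : ∀ u, g z + 1 / (2 * ρ) * ‖z - (a + ρ • s)‖ ^ 2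
      ≤ g u + 1 / (2 * ρ) * ‖u - (a + ρ • s)‖ ^ 2)
    (hg : DifferentiableAt ℝ g z) (w : E) :
    fderiv ℝ g z w = ⟪s, w⟫ - ρ⁻¹ * ⟪z - a, w⟫ := by
  have hφ := hg.hasFDerivAt.add
    (((hasFDerivAt_id z).sub_const (a + ρ • s)).norm_sq.const_mul (1 / (2 * ρ)))
  have hmin' : IsLocalMin (fun u => g u + 1 / (2 * ρ) * ‖u - (a + ρ • s)‖ ^ 2) z :=
    IsMinOn.isLocalMin (s := Set.univ) (fun u _ => hmin u) univ_mem
  have h0 := congrArg (· w) (hmin'.hasFDerivAt_eq_zero hφ)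
  simp only [one_div, mul_inv_rev, id_eq, map_sub, map_add, map_smul,
    ContinuousLinearMap.comp_id, add_apply, smul_apply, sub_apply, coe_innerSL_apply, smul_eq_mul,
    nsmul_eq_mul, Nat.cast_ofNat, zero_apply] at h0
  rw [inner_sub_left]
  field_simp at h0 ⊢
  linarith


theorem hasDerivAt_inner_comp_line {Ψ : E → F} {z : E} (hΨ : DifferentiableAt ℝ Ψ z)
    (d : E) (w e : F) :
    HasDerivAt (fun t : ℝ => ⟪Ψ (z + t • d), w + t • e⟫)
      (⟪Ψ z, e⟫ + ⟪fderiv ℝ Ψ z d, w⟫) 0 := by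
  simpa using (hΨ.hasFDerivAt.hasLineDerivAt d).inner ℝ ((hasFDerivAt_id w).hasLineDerivAt e)

theorem hasDerivAt_add_sum_sub_inner_line {ι : Type*} [Fintype ι] {F : ι → Type*}
    [∀ i, NormedAddCommGroup (F i)] [∀ i, InnerProductSpace ℝ (F i)]
    {g : E → ℝ} {c : ∀ i, F i → ℝ} {Ψ : ∀ i, E → F i} {z : E} {w : ∀ i, F i}
    (hg : DifferentiableAt ℝ g z) (hc : ∀ i, DifferentiableAt ℝ (c i) (w i))
    (hΨ : ∀ i, DifferentiableAt ℝ (Ψ i) z) (d : E) (e : ∀ i, F i) :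
    HasDerivAt
      (fun t : ℝ => g (z + t • d) + ∑ i, (c i (w i + t • e i) - ⟪Ψ i (z + t • d), w i + t • e i⟫))
      (fderiv ℝ g z d + ∑ i, (fderiv ℝ (c i) (w i) (e i)
        - (⟪Ψ i z, e i⟫ + ⟪fderiv ℝ (Ψ i) z d, w i⟫))) 0 :=
  (hg.hasFDerivAt.hasLineDerivAt d).add <| HasDerivAt.fun_sum fun i _ =>
    ((hc i).hasFDerivAt.hasLineDerivAt (e i)).sub (hasDerivAt_inner_comp_line (hΨ i) d (w i) (e i))

theorem inner_apply_sub_inner_apply_le (A B : E →L[ℝ] F) (d : E) (y y' : F) {L : ℝ}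
    (hAB : ‖A - B‖ ≤ L * ‖d‖) :
    ⟪y, A d⟫ - ⟪B d, y'⟫ ≤ (L * ‖y‖ + 1 / 2) * ‖d‖ ^ 2 + 1 / 2 * ‖B‖ ^ 2 * ‖y' - y‖ ^ 2 := by
  have hsplit : ⟪y, A d⟫ - ⟪B d, y'⟫ = ⟪y, (A - B) d⟫ - ⟪B d, y' - y⟫ := by
    rw [sub_apply, inner_sub_right, inner_sub_right, real_inner_comm y (B d)]
    ring
  have hLip : ⟪y, (A - B) d⟫ ≤ L * ‖y‖ * ‖d‖ ^ 2 := calc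
    ⟪y, (A - B) d⟫ ≤ ‖y‖ * (‖A - B‖ * ‖d‖) :=
      (real_inner_le_norm _ _).trans (by gcongr; exact (A - B).le_opNorm d)
    _ ≤ ‖y‖ * (L * ‖d‖ * ‖d‖) := by gcongr
    _ = L * ‖y‖ * ‖d‖ ^ 2 := by ring
  have hYoung : -⟪B d, y' - y⟫ ≤ 1 / 2 * ‖d‖ ^ 2 + 1 / 2 * ‖B‖ ^ 2 * ‖y' - y‖ ^ 2 := by
    have h : -⟪B d, y' - y⟫ ≤ ‖B‖ * ‖d‖ * ‖y' - y‖ := calc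
      -⟪B d, y' - y⟫ ≤ ‖B d‖ * ‖y' - y‖ := (neg_le_abs _).trans (abs_real_inner_le_norm _ _)
      _ ≤ ‖B‖ * ‖d‖ * ‖y' - y‖ := by gcongr; exact B.le_opNorm d
    nlinarith [sq_nonneg (‖d‖ - ‖B‖ * ‖y' - y‖)]
  linarith

end

theorem limsup_div_le_of_le_of_hasDerivAt {Δ G : ℝ → ℝ} {a C ℓ : ℝ}
    (hΔ : ∀ t, 0 < t → Δ t ≤ a * t + C * t ^ 2 + (G t - G 0)) (hG : HasDerivAt G ℓ 0) :
    limsup (fun t => ((Δ t / t : ℝ) : EReal)) (𝓝[>] 0) ≤ ((a + ℓ : ℝ) : EReal) := by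
  have hslope : Tendsto (fun t => (G t - G 0) / t) (𝓝[>] 0) (𝓝 ℓ) := by
    refine ((hasDerivAt_iff_tendsto_slope.mp hG).mono_left
      (nhdsWithin_mono 0 fun t ht => ne_of_gt ht)).congr fun t => ?_
    simp [slope_def_field]
  have hlin : Tendsto (fun t : ℝ => a + C * t) (𝓝[>] 0) (𝓝 a) := by
    have hcont : Continuous fun t : ℝ => a + C * t := by fun_prop
    exact (hcont.tendsto' 0 a (by simp)).mono_left nhdsWithin_le_nhds
  refine (limsup_le_limsup ?_).trans_eq (EReal.tendsto_coe.2 (hlin.add hslope)).limsup_eq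
  filter_upwards [self_mem_nhdsWithin] with t (ht : 0 < t)
  refine EReal.coe_le_coe_iff.2 ((div_le_iff₀ ht).2 ?_)
  rw [add_mul, add_mul, div_mul_cancel₀ _ ht.ne']
  nlinarith [hΔ t ht]

theorem dini_descent_direction_general {n p : ℕ} {m : Fin p → ℕ}
    (f g : EuclideanSpace ℝ (Fin n) → ℝ) (κ : ℝ)
    (Ψ : ∀ i, EuclideanSpace ℝ (Fin n) → EuclideanSpace ℝ (Fin (m i)))
    (L : Fin p → ℝ)
    (hΨdiff : ∀ i, Differentiable ℝ (Ψ i))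
    (hΨlip : ∀ i, ∀ a b : EuclideanSpace ℝ (Fin n),
      ‖fderiv ℝ (Ψ i) a - fderiv ℝ (Ψ i) b‖ ≤ L i * ‖a - b‖)
    (c : ∀ i, EuclideanSpace ℝ (Fin (m i)) → ℝ)
    (x : EuclideanSpace ℝ (Fin n)) (y : ∀ i, EuclideanSpace ℝ (Fin (m i)))
    (γ : ℝ) (hγ0 : 0 < γ) (μ : Fin p → ℝ) (hμ0 : ∀ i, 0 < μ i)
    (v : EuclideanSpace ℝ (Fin n))
    (hv : ∀ z, f z ≤ f x + ⟪v, z - x⟫ + κ * ‖z - x‖ ^ 2)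
    (xh : EuclideanSpace ℝ (Fin n))
    (hxh : ∀ u : EuclideanSpace ℝ (Fin n),
      g xh + (1 / (2 * γ)) *
          ‖xh - (x + γ • ∑ i, (ContinuousLinearMap.adjoint (fderiv ℝ (Ψ i) x)) (y i) - γ • v)‖ ^ 2
        ≤ g u + (1 / (2 * γ)) *
          ‖u - (x + γ • ∑ i, (ContinuousLinearMap.adjoint (fderiv ℝ (Ψ i) x)) (y i) - γ • v)‖ ^ 2)
    (hgdiff : DifferentiableAt ℝ g xh)
    (yh : ∀ i, EuclideanSpace ℝ (Fin (m i)))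
    (hyh : ∀ i, ∀ u : EuclideanSpace ℝ (Fin (m i)),
      c i (yh i) + (1 / (2 * μ i)) * ‖yh i - (y i + (μ i) • Ψ i xh)‖ ^ 2
        ≤ c i u + (1 / (2 * μ i)) * ‖u - (y i + (μ i) • Ψ i xh)‖ ^ 2)
    (hcdiff : ∀ i, DifferentiableAt ℝ (c i) (yh i))
    (hvh : ∃ vh : EuclideanSpace ℝ (Fin n),
      ∀ z, f z ≤ f xh + ⟪vh, z - xh⟫ + κ * ‖z - xh‖ ^ 2)
    :
    diniUpper2
        (fun x' y' => f x' + g x' + ∑ i, (c i (y' i) - ⟪Ψ i x', y' i⟫))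
        xh yh (xh - x) (fun i => yh i - y i)
      ≤ (((2 * κ + (p : ℝ) / 2 + ∑ i, L i * ‖y i‖ - 1 / γ) * ‖xh - x‖ ^ 2
          + ∑ i, ((1 / 2) * ‖fderiv ℝ (Ψ i) xh‖ ^ 2 - 1 / μ i) * ‖yh i - y i‖ ^ 2 : ℝ)
        : EReal) := by
  obtain ⟨vh, hvh⟩ := hvh
  refine (limsup_div_le_of_le_of_hasDerivAt (a := ⟪vh, xh - x⟫) (C := κ * ‖xh - x‖ ^ 2)
    (fun t _ => ?_) (hasDerivAt_add_sum_sub_inner_line hgdiff hcdiff (fun i => hΨdiff i xh) (xh - x)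
      fun i => yh i - y i)).trans (EReal.coe_le_coe_iff.2 ?_)
  · have := IsUpperSubgradient.sub_le hvh (xh - x) t
    simp only [zero_smul, add_zero]
    linarith
  rw [add_sub_assoc, ← smul_sub] at hxh
  have hDg : fderiv ℝ g xh (xh - x)
      = ∑ i, ⟪y i, fderiv ℝ (Ψ i) x (xh - x)⟫ - ⟪v, xh - x⟫ - γ⁻¹ * ‖xh - x‖ ^ 2 := by
    rw [fderiv_apply_eq_of_isMinimizer_prox hγ0 hxh hgdiff (xh - x), inner_sub_left, sum_inner,
      real_inner_self_eq_norm_sq]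
    simp only [ContinuousLinearMap.adjoint_inner_left]
  have hterm i : ⟪y i, fderiv ℝ (Ψ i) x (xh - x)⟫ + (fderiv ℝ (c i) (yh i) (yh i - y i)
      - (⟪Ψ i xh, yh i - y i⟫ + ⟪fderiv ℝ (Ψ i) xh (xh - x), yh i⟫))
      ≤ (L i * ‖y i‖ + 1 / 2) * ‖xh - x‖ ^ 2
        + (1 / 2 * ‖fderiv ℝ (Ψ i) xh‖ ^ 2 - 1 / μ i) * ‖yh i - y i‖ ^ 2 := by
    rw [fderiv_apply_eq_of_isMinimizer_prox (hμ0 i) (hyh i) (hcdiff i),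
      real_inner_self_eq_norm_sq]
    linear_combination inner_apply_sub_inner_apply_le (fderiv ℝ (Ψ i) x) (fderiv ℝ (Ψ i) xh)
      (xh - x) (y i) (yh i) (norm_sub_rev x xh ▸ hΨlip i x xh)
  have hsum : ∑ i, ((L i * ‖y i‖ + 1 / 2) * ‖xh - x‖ ^ 2
        + (1 / 2 * ‖fderiv ℝ (Ψ i) xh‖ ^ 2 - 1 / μ i) * ‖yh i - y i‖ ^ 2)
      = (∑ i, L i * ‖y i‖ + p / 2) * ‖xh - x‖ ^ 2
        + ∑ i, (1 / 2 * ‖fderiv ℝ (Ψ i) xh‖ ^ 2 - 1 / μ i) * ‖yh i - y i‖ ^ 2 := by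
    rw [Finset.sum_add_distrib, ← Finset.sum_mul, Finset.sum_add_distrib]
    simp only [Finset.sum_const, Finset.card_univ, Fintype.card_fin, nsmul_eq_mul]
    ring
  have hmono := IsUpperSubgradient.inner_sub_le hv hvh
  rw [inner_sub_left] at hmono
  have hterms := Finset.sum_le_sum fun i (_ : i ∈ Finset.univ) => hterm i
  rw [Finset.sum_add_distrib, hsum] at hterms
  rw [hDg]
  linear_combination hmono + hterms

/-- Proposition 3.5: the direction `(d, e)` produced by the double-proximal subgradient
step is a descent direction for the primal-dual objective `Φ` at `(x̂, ŷ)` whenever `g`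
and the `cᵢ` are differentiable there. -/
theorem dini_descent_direction {n p : ℕ} {m : Fin p → ℕ}
    (f g : EuclideanSpace ℝ (Fin n) → ℝ) (κ : ℝ) (hκ : 0 ≤ κ)
    (Ψ : ∀ i, EuclideanSpace ℝ (Fin n) → EuclideanSpace ℝ (Fin (m i)))
    (L : Fin p → ℝ)
    (hΨdiff : ∀ i, Differentiable ℝ (Ψ i))
    (hΨlip : ∀ i, ∀ a b : EuclideanSpace ℝ (Fin n),
      ‖fderiv ℝ (Ψ i) a - fderiv ℝ (Ψ i) b‖ ≤ L i * ‖a - b‖)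
    (c : ∀ i, EuclideanSpace ℝ (Fin (m i)) → ℝ)
    (hc : ∀ i, ConvexOn ℝ Set.univ (c i))
    (x : EuclideanSpace ℝ (Fin n)) (y : ∀ i, EuclideanSpace ℝ (Fin (m i)))
    (γ : ℝ) (hγ0 : 0 < γ) (μ : Fin p → ℝ) (hμ0 : ∀ i, 0 < μ i)
    (v : EuclideanSpace ℝ (Fin n))
    (hv : ∀ z, f z ≤ f x + ⟪v, z - x⟫ + κ * ‖z - x‖ ^ 2)
    (xh : EuclideanSpace ℝ (Fin n))
    (hxh : ∀ u : EuclideanSpace ℝ (Fin n),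
      g xh + (1 / (2 * γ)) *
          ‖xh - (x + γ • ∑ i, (ContinuousLinearMap.adjoint (fderiv ℝ (Ψ i) x)) (y i) - γ • v)‖ ^ 2
        ≤ g u + (1 / (2 * γ)) *
          ‖u - (x + γ • ∑ i, (ContinuousLinearMap.adjoint (fderiv ℝ (Ψ i) x)) (y i) - γ • v)‖ ^ 2)
    (hgdiff : DifferentiableAt ℝ g xh)
    (yh : ∀ i, EuclideanSpace ℝ (Fin (m i)))
    (hyh : ∀ i, ∀ u : EuclideanSpace ℝ (Fin (m i)),
      c i (yh i) + (1 / (2 * μ i)) * ‖yh i - (y i + (μ i) • Ψ i xh)‖ ^ 2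
        ≤ c i u + (1 / (2 * μ i)) * ‖u - (y i + (μ i) • Ψ i xh)‖ ^ 2)
    (hcdiff : ∀ i, DifferentiableAt ℝ (c i) (yh i))
    (hvh : ∃ vh : EuclideanSpace ℝ (Fin n),
      ∀ z, f z ≤ f xh + ⟪vh, z - xh⟫ + κ * ‖z - xh‖ ^ 2)
    :
    diniUpper2
        (fun x' y' => f x' + g x' + ∑ i, (c i (y' i) - ⟪Ψ i x', y' i⟫))
        xh yh (xh - x) (fun i => yh i - y i)
      ≤ (((2 * κ + (p : ℝ) / 2 + ∑ i, L i * ‖y i‖ - 1 / γ) * ‖xh - x‖ ^ 2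
          + ∑ i, ((1 / 2) * ‖fderiv ℝ (Ψ i) xh‖ ^ 2 - 1 / μ i) * ‖yh i - y i‖ ^ 2 : ℝ)
        : EReal) :=
  dini_descent_direction_general f g κ Ψ L hΨdiff hΨlip c x y γ hγ0 μ hμ0 v hv xh hxh hgdiff yh hyh
    hcdiff hvh
end

section
/- Let σ ≥ 0, let (Δ_k)_{k∈ℕ} be a sequence of nonnegative reals, and let (s_k)_{k∈ℕ} be a nonincreasing sequence of reals. Fix k₀ ∈ ℕ and k ≥ k₀, and suppose that Δ_{j+1} ≤ √(σ (s_j − s_{j+1}) Δ_j) for every j with k₀ ≤ j ≤ k. Then Δ_{k+1} ≤ σ Σ_{j=0}^{k−k₀} 2^{−(j+1)} (s_{k−j} − s_{k−j+1}) + 2^{−(k+1−k₀)} Δ_{k₀}. -/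
open scoped BigOperators

/-!
By AM–GM, `√(b_j Δ_j) ≤ (b_j + Δ_j) / 2` with `b_j = σ (s_j - s_{j+1}) ≥ 0`, so `Δ` obeys the
linear recursion `Δ_{j+1} ≤ (b_j + Δ_j) / 2`. Unrolling it from `k₀` to `k` weights `b_{k-j}`
by `2^{-(j+1)}` and `Δ_{k₀}` by `2^{-(k+1-k₀)}`.
-/

open Finset

theorem Real.sqrt_mul_le_add_div_two {x y : ℝ} (hx : 0 ≤ x) (hy : 0 ≤ y) :
    √(x * y) ≤ (x + y) / 2 :=
  (Real.sqrt_le_left (by positivity)).2 (by nlinarith [sq_nonneg (x - y)])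

theorem le_sum_of_le_add_div_two {a b : ℕ → ℝ} {k₀ k : ℕ} (hk : k₀ ≤ k)
    (h : ∀ j, k₀ ≤ j → j ≤ k → a (j + 1) ≤ (b j + a j) / 2) :
    a (k + 1) ≤ ∑ j ∈ range (k - k₀ + 1), (1 / 2 : ℝ) ^ (j + 1) * b (k - j)
      + (1 / 2 : ℝ) ^ (k + 1 - k₀) * a k₀ := by
  induction k, hk using Nat.le_induction with
  | base =>
    simp only [Nat.sub_self, zero_add, sum_range_one, Nat.sub_zero, Nat.add_sub_cancel_left]
    linarith [h k₀ le_rfl le_rfl]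
  | succ k hk ih =>
    have ih := ih fun j hj hjk ↦ h j hj (by omega)
    have halve : ∑ j ∈ range (k - k₀ + 1), (1 / 2 : ℝ) ^ (j + 1 + 1) * b (k + 1 - (j + 1))
        = (∑ j ∈ range (k - k₀ + 1), (1 / 2 : ℝ) ^ (j + 1) * b (k - j)) / 2 := by
      rw [sum_div]
      refine sum_congr rfl fun j _ ↦ ?_
      rw [Nat.add_sub_add_right, pow_succ]
      ring
    rw [show k + 1 - k₀ + 1 = k - k₀ + 1 + 1 by omega, sum_range_succ', halve,
      show k + 1 + 1 - k₀ = k + 1 - k₀ + 1 by omega, pow_succ _ (k + 1 - k₀), Nat.sub_zero]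
    linarith [h (k + 1) (by omega) le_rfl]

/-- Claim 2 in the KL convergence proof of the Boosted Double-proximal Subgradient Algorithm:
the inductive estimate obtained from the square-root recursion and the weighted AM–GM
inequality. -/
theorem kl_inductive_estimate (σ : ℝ) (hσ : 0 ≤ σ)
    (Δ : ℕ → ℝ) (hΔ : ∀ k, 0 ≤ Δ k)
    (s : ℕ → ℝ) (hs : ∀ k, s (k + 1) ≤ s k)
    (k₀ k : ℕ) (hk : k₀ ≤ k)
    (hrec : ∀ j, k₀ ≤ j → j ≤ k → Δ (j + 1) ≤ Real.sqrt (σ * (s j - s (j + 1)) * Δ j)) :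
    Δ (k + 1) ≤ σ * ∑ j ∈ Finset.range (k - k₀ + 1),
        (1 / 2 : ℝ) ^ (j + 1) * (s (k - j) - s (k - j + 1))
      + (1 / 2 : ℝ) ^ (k + 1 - k₀) * Δ k₀ := by
  have halved : ∀ j, k₀ ≤ j → j ≤ k →
      Δ (j + 1) ≤ (σ * (s j - s (j + 1)) + Δ j) / 2 := fun j hj hjk ↦
    (hrec j hj hjk).trans <|
      Real.sqrt_mul_le_add_div_two (mul_nonneg hσ (sub_nonneg.2 (hs j))) (hΔ j)
  convert le_sum_of_le_add_div_two hk halved using 2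
  rw [mul_sum]
  exact sum_congr rfl fun j _ ↦ by ring
end

section
/- Let n ≥ 1 and q ≥ 1 be natural numbers and define φ_q : ℝⁿ → ℝ by φ_q(x) := Σ_{i=1}^n x_i² − Σ_{i=1}^n |x_i| − Σ_{j=1}^q Σ_{i=1}^n ( |x_i − j| + |x_i + j| ) − Σ_{i=1}^n |x_i − (q+1)|. Then for all x ∈ ℝⁿ, φ_q(x) ≥ −n(q² + 3q + 2), and equality holds if and only if x_i = −(q+1) for every i = 1,…,n. In particular, x* := (−(q+1), …, −(q+1)) is the unique global minimizer of φ_q, with optimal value φ_q(x*) = −n(q² + 3q + 2). -/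
open scoped BigOperators

/-- The test function `φ_q(x) = ‖x‖² − ‖x‖₁ − Σ_{j=1}^q (‖x − je‖₁ + ‖x + je‖₁)
− ‖x − (q+1)e‖₁` written coordinatewise. -/
noncomputable def phiTest (n q : ℕ) (x : EuclideanSpace ℝ (Fin n)) : ℝ :=
  ∑ i, (x i) ^ 2 - ∑ i, |x i|
    - ∑ j ∈ Finset.Icc 1 q, (∑ i, (|x i - (j : ℝ)| + |x i + (j : ℝ)|))
    - ∑ i, |x i - ((q : ℝ) + 1)|

/-!
The function splits into one-variable summands `t² − Σ_{c=−q}^{q+1} |t − c|`. Writing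
`|y| = 2 y⁺ − y` and `s = t + q + 1`, such a summand equals
`s² − 2 Σ_{k=1}^{2q+2} (s − k)⁺ − (q+1)(q+2)`, and `2 Σ_{k ≥ 1} (s − k)⁺ < s²` for `s ≠ 0`:
for `s ≤ 1` the sum vanishes, and otherwise its first term is `s − 1` and the rest is the same
sum at `s − 1`, so induction gives `< 2(s − 1) + (s − 1)² < s²`.
-/

open Finset

section OrderedRing

variable {α : Type*} [CommRing α] [LinearOrder α] [IsStrictOrderedRing α]

lemma abs_eq_two_mul_posPart_sub (a : α) : |a| = 2 * a⁺ - a :=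
  eq_sub_of_add_eq (by rw [abs_add_eq_two_nsmul_posPart, two_nsmul, two_mul])

lemma sum_posPart_sub_succ_eq_zero (N : ℕ) {s : α} (hs : s ≤ 1) :
    ∑ k ∈ range N, (s - (k + 1))⁺ = 0 :=
  sum_eq_zero fun k _ ↦ posPart_eq_zero.2 (by linarith [k.cast_nonneg' (α := α)])

lemma two_mul_sum_posPart_sub_lt_sq (N : ℕ) {s : α} (hs : s ≠ 0) :
    2 * ∑ k ∈ range N, (s - (k + 1))⁺ < s ^ 2 := by
  induction N generalizing s with
  | zero =>
    rw [sum_range_zero, mul_zero]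
    positivity
  | succ N ih =>
    rcases le_or_gt s 1 with hs1 | hs1
    · rw [sum_posPart_sub_succ_eq_zero _ hs1, mul_zero]
      positivity
    · have hshift : ∀ k : ℕ, s - ((k + 1 : ℕ) + 1) = s - 1 - (k + 1) := fun k ↦ by push_cast; ring
      rw [sum_range_succ']
      simp only [hshift, Nat.cast_zero, zero_add, posPart_of_nonneg (by linarith : 0 ≤ s - 1)]
      nlinarith [ih (s := s - 1) (by linarith)]

lemma two_mul_sum_posPart_sub_le_sq (N : ℕ) (s : α) :
    2 * ∑ k ∈ range N, (s - (k + 1))⁺ ≤ s ^ 2 := by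
  rcases eq_or_ne s 0 with rfl | hs
  · rw [sum_posPart_sub_succ_eq_zero N zero_le_one, mul_zero, sq, mul_zero]
  · exact (two_mul_sum_posPart_sub_lt_sq N hs).le

end OrderedRing

lemma sum_breakpoints_eq_sum_range {M : Type*} [AddCommMonoid M] (f : ℝ → M) (q : ℕ) :
    f 0 + ∑ j ∈ Icc 1 q, (f j + f (-j)) + f (q + 1) = ∑ k ∈ range (2 * q + 2), f (k - q) := by
  induction q with
  | zero => simp [sum_range_succ]
  | succ q ih =>
    rw [sum_Icc_succ_top (by omega), show 2 * (q + 1) + 2 = 2 * q + 2 + 1 + 1 by ring,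
      sum_range_succ', sum_range_succ]
    have hshift : ∀ k : ℕ, (k : ℝ) + 1 - (q + 1) = k - q := fun k ↦ by ring
    push_cast
    simp only [hshift, ← ih]
    rw [show (2 * q + 2 + 1 : ℝ) - (q + 1) = q + 1 + 1 by ring, zero_sub]
    abel

noncomputable def phiCoord (q : ℕ) (t : ℝ) : ℝ :=
  t ^ 2 - |t| - ∑ j ∈ Icc 1 q, (|t - j| + |t + j|) - |t - (q + 1)|

lemma phiTest_eq_sum_phiCoord (n q : ℕ) (x : EuclideanSpace ℝ (Fin n)) :
    phiTest n q x = ∑ i, phiCoord q (x i) := by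
  simp only [phiTest, phiCoord, sum_sub_distrib]
  rw [sum_comm]

lemma phiCoord_eq (q : ℕ) (t : ℝ) :
    phiCoord q t = (t + q + 1) ^ 2 - 2 * ∑ k ∈ range (2 * q + 2), (t + q + 1 - (k + 1))⁺
      - ((q : ℝ) ^ 2 + 3 * q + 2) := by
  have hpos := sum_breakpoints_eq_sum_range (fun c ↦ (t - c)⁺) q
  have hshift : ∑ k ∈ range (2 * q + 2), (t - (k - q))⁺
      = ∑ k ∈ range (2 * q + 2), (t + q + 1 - (k + 1))⁺ :=
    sum_congr rfl fun k _ ↦ by ring_nf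
  simp only [sub_zero, sub_neg_eq_add, hshift] at hpos
  have hpair : ∑ j ∈ Icc 1 q, (|t - j| + |t + j|)
      = 2 * ∑ j ∈ Icc 1 q, ((t - j)⁺ + (t + j)⁺) - 2 * q * t := by
    rw [mul_sum, show 2 * q * t = ∑ j ∈ Icc 1 q, 2 * t by simp; ring, ← sum_sub_distrib]
    exact sum_congr rfl fun j _ ↦ by simp only [abs_eq_two_mul_posPart_sub]; ring
  rw [phiCoord, hpair, abs_eq_two_mul_posPart_sub t, abs_eq_two_mul_posPart_sub (t - (q + 1)),
    ← hpos]
  ring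

lemma neg_le_phiCoord (q : ℕ) (t : ℝ) : -((q : ℝ) ^ 2 + 3 * q + 2) ≤ phiCoord q t := by
  linarith [phiCoord_eq q t, two_mul_sum_posPart_sub_le_sq (2 * q + 2) (t + q + 1)]

lemma phiCoord_eq_neg_iff (q : ℕ) (t : ℝ) :
    phiCoord q t = -((q : ℝ) ^ 2 + 3 * q + 2) ↔ t = -(q + 1) := by
  rw [phiCoord_eq]
  constructor
  · intro h
    by_contra ht
    have := two_mul_sum_posPart_sub_lt_sq (2 * q + 2) (s := t + q + 1) fun h' ↦ ht (by linarith)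
    linarith
  · rintro rfl
    rw [show -((q : ℝ) + 1) + q + 1 = 0 by ring, sum_posPart_sub_succ_eq_zero _ zero_le_one]
    ring

theorem phiTest_global_min_general (n q : ℕ) :
    ∀ x : EuclideanSpace ℝ (Fin n),
      -(n : ℝ) * ((q : ℝ) ^ 2 + 3 * (q : ℝ) + 2) ≤ phiTest n q x
        ∧ (phiTest n q x = -(n : ℝ) * ((q : ℝ) ^ 2 + 3 * (q : ℝ) + 2)
            ↔ ∀ i, x i = -((q : ℝ) + 1)) := by
  intro x
  have hle : ∀ i ∈ univ, -((q : ℝ) ^ 2 + 3 * q + 2) ≤ phiCoord q (x i) :=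
    fun i _ ↦ neg_le_phiCoord q (x i)
  have hconst : -(n : ℝ) * ((q : ℝ) ^ 2 + 3 * q + 2)
      = ∑ _i : Fin n, -((q : ℝ) ^ 2 + 3 * q + 2) := by
    rw [sum_const, card_univ, Fintype.card_fin, nsmul_eq_mul, neg_mul_comm]
  rw [phiTest_eq_sum_phiCoord, hconst, eq_comm, sum_eq_sum_iff_of_le hle]
  simp only [mem_univ, true_implies]
  exact ⟨sum_le_sum hle, forall_congr' fun i ↦ by rw [eq_comm, phiCoord_eq_neg_iff]⟩

/-- The test function `φ_q` is bounded below by `−n(q² + 3q + 2)`, with equality exactly at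
the point whose coordinates all equal `−(q+1)`; thus this point is the unique global
minimizer, with optimal value `−n(q² + 3q + 2)`. -/
theorem phiTest_global_min (n q : ℕ) (hn : 1 ≤ n) (hq : 1 ≤ q) :
    ∀ x : EuclideanSpace ℝ (Fin n),
      -(n : ℝ) * ((q : ℝ) ^ 2 + 3 * (q : ℝ) + 2) ≤ phiTest n q x
        ∧ (phiTest n q x = -(n : ℝ) * ((q : ℝ) ^ 2 + 3 * (q : ℝ) + 2)
            ↔ ∀ i, x i = -((q : ℝ) + 1)) :=
  phiTest_global_min_general n q
end
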